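/- There is no ad_{𝔥^{-1}}-invariant complex structure on 𝔩^{-1} (hence no invariant almost complex structure on L(ℂH^n)): the element h_1^{-1} ∈ 𝔥^{-1} acts on the one-dimensional subspaces ℝE_± of 𝔩^{-1} by the real eigenvalues ±2, and any invariant endomorphism J must preserve these real eigenspaces, which is incompatible with J² = −Id. -/

import Mathlib

/-!
STATEMENT 19: There is no ad_{𝔥^{−1}}-invariant complex structure on 𝔩^{−1} (hence no
invariant almost complex structure on L(ℂH^n)): the element h₁^{−1} ∈ 𝔥^{−1} acts on the
one-dimensional subspaces ℝE_± of 𝔩^{−1} by the real eigenvalues ±2, and any invariant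
endomorphism J must preserve these real eigenspaces, which is incompatible with
J² = −Id.

We realize 𝔩^{−1} as the space of tuples (x₁,x₂,X₁,X₂) ∈ ℝ × ℝ × ℂ^{n−1} × ℂ^{n−1}
(n = m + 2), on which ad_{h₁^{−1}} acts by
(x₁,x₂,X₁,X₂) ↦ (−2εx₂, 2x₁, −X₂, εX₁) with ε = −1, i.e. (2x₂, 2x₁, −X₂, −X₁);
an invariant almost complex structure is an ℝ-linear J commuting with this action and
satisfying J² = −Id.  The claim: no such J exists.
-/

open scoped BigOperators

noncomputable section

abbrev Ltup (m : ℕ) : Type :=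
  ℝ × ℝ × (Fin (m + 1) → ℂ) × (Fin (m + 1) → ℂ)

/-- The isotropy action ad_{h₁^{−1}} on 𝔩^{−1} in tuple form. -/
def adh1 (m : ℕ) (a : Ltup m) : Ltup m :=
  (2 * a.2.1, 2 * a.1, fun j => -(a.2.2.2 j), fun j => -(a.2.2.1 j))


section CommutingEndomorphism

variable {K V : Type*} [Field K] [AddCommGroup V] [Module K V]

theorem LinearMap.map_eigenvector_of_commute {J : V →ₗ[K] V} {A : V → V}
    (hJA : ∀ x, J (A x) = A (J x)) {μ : K} {v : V} (hv : A v = μ • v) :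
    A (J v) = μ • J v := by
  rw [← hJA, hv, J.map_smul]

theorem LinearMap.eq_zero_of_apply_eq_smul_of_apply_apply_eq_neg [LinearOrder K]
    [IsStrictOrderedRing K] {J : V →ₗ[K] V} {v : V} {c : K}
    (hsq : J (J v) = -v) (hv : J v = c • v) : v = 0 := by
  have hc : (c * c + 1) • v = 0 := by
    rw [add_smul, one_smul, mul_smul, ← hv, ← J.map_smul, ← hv, hsq, neg_add_cancel]
  exact (smul_eq_zero.mp hc).resolve_left
    (add_pos_of_nonneg_of_pos (mul_self_nonneg c) one_pos).ne'

end CommutingEndomorphism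

/-- The vector `E₊` spanning the eigenvalue-`2` eigenspace of `ad_{h₁^{−1}}`. -/
def ePlus (m : ℕ) : Ltup m := (1, 1, 0, 0)

theorem ePlus_ne_zero (m : ℕ) : ePlus m ≠ 0 := by
  simp [ePlus, Prod.ext_iff]

theorem adh1_ePlus (m : ℕ) : adh1 m (ePlus m) = (2 : ℝ) • ePlus m := by
  ext <;> simp [adh1, ePlus]

theorem eq_smul_ePlus_of_adh1_eq_two_smul {m : ℕ} {w : Ltup m}
    (hw : adh1 m w = (2 : ℝ) • w) : w = w.1 • ePlus m := by
  obtain ⟨x₁, x₂, X₁, X₂⟩ := w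
  simp only [adh1, Prod.smul_mk, Prod.mk.injEq, funext_iff, Pi.smul_apply, smul_eq_mul,
    Complex.real_smul, Complex.ofReal_ofNat] at hw
  obtain ⟨h₁, h₂, hX₁, hX₂⟩ := hw
  -- On `V₊ + V₋` the square of `adh1` is the identity, so `2` is not an eigenvalue there.
  have hX₁0 : X₁ = 0 := funext fun j => by
    have : (3 : ℂ) * X₁ j = 0 := by linear_combination -(2 * hX₁ j) + hX₂ j
    simpa using this
  have hX₂0 : X₂ = 0 := funext fun j => by
    simpa [hX₁0] using (hX₁ j).symm
  obtain rfl : x₂ = x₁ := by linarith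
  ext <;> simp [ePlus, hX₁0, hX₂0]

theorem no_invariant_complex_structure_on_l_CHn (m : ℕ)
    (J : Ltup m →ₗ[ℝ] Ltup m)
    (hequiv : ∀ a, J (adh1 m a) = adh1 m (J a))
    (hsq : ∀ a, J (J a) = -a) : False :=
  ePlus_ne_zero m <| J.eq_zero_of_apply_eq_smul_of_apply_apply_eq_neg (hsq _) <|
    eq_smul_ePlus_of_adh1_eq_two_smul <| J.map_eigenvector_of_commute hequiv (adh1_ePlus m)
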